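/- For all integers m and e, the tetrahedral index satisfies the symmetry I_Δ(m,e) = (-u)^{-e} · I_Δ(e, -e-m), where u plays the role of q^{1/2}. -/

import Mathlib

/-!
Write `q = u²`. The tetrahedral index is the diagonal value `I_Δ(m,e) = S(u⁻ᵐ, u⁻ᵐ, e)` of
`S(v,w,e) = ∑ₙ A_v(n) B_w(n+e)`, where `A_v` and `B_w` are the coefficients of `(qvx;q)_∞` and
`1/(wx;q)_∞`. The functional equations `(qvx;q)_∞ = (1 - qvx)(q²vx;q)_∞` and
`(1 - wx)/(wx;q)_∞ = 1/(qwx;q)_∞` give three-term relations for `S` in `v` and in `w`; when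
`v w qᵏ = 1` they telescope to `S(v,w,e) = (-1)ᵏ vᵏ u^{k(k+1)} S(qᵏv, qᵏw, e+k)`, which on the
diagonal reads `S(u⁻ᵐ,u⁻ᵐ,e) = (-u)ᵐ S(uᵐ,uᵐ,e+m)`. Independently, swapping the roles of the two
factors term by term gives `S(uᶜ,uᶜ,s) = (-u)⁻ˢ S(uᶜ⁻ˢ,uᶜ⁻ˢ,-s)`, and the two identities combine to
the symmetry.
-/

open scoped BigOperators

/-- Finite q-Pochhammer symbol `(a;q)_n = ∏_{i=0}^{n-1} (1 - a q^i)`. -/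
noncomputable def qPoch (a q : ℂ) (n : ℕ) : ℂ :=
  ∏ i ∈ Finset.range n, (1 - a * q ^ i)

/-- Infinite q-Pochhammer symbol `(a;q)_∞ = ∏_{i=0}^{∞} (1 - a q^i)`. -/
noncomputable def qPochInf (a q : ℂ) : ℂ :=
  ∏' i : ℕ, (1 - a * q ^ i)

/-- The `n`-th term of the series defining the tetrahedral index `I_Δ(m,e)`,
with `q = u^2` and vanishing below `e₊ = max(-e,0)`. -/
noncomputable def tetTerm (u : ℂ) (m e : ℤ) (n : ℕ) : ℂ :=
  if (-e).toNat ≤ n then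
    (-1 : ℂ) ^ n * u ^ ((n : ℤ) * ((n : ℤ) + 1) - (2 * (n : ℤ) + e) * m) /
      (qPoch (u ^ 2) (u ^ 2) n * qPoch (u ^ 2) (u ^ 2) ((n : ℤ) + e).toNat)
  else 0

/-- The tetrahedral index `I_Δ(m,e) = Σ_{n=e₊}^∞ (-1)^n u^{n(n+1)-(2n+e)m}/((q;q)_n (q;q)_{n+e})`. -/
noncomputable def tetIndex (u : ℂ) (m e : ℤ) : ℂ := ∑' n : ℕ, tetTerm u m e n

theorem qPoch_succ (a q : ℂ) (n : ℕ) : qPoch a q (n + 1) = qPoch a q n * (1 - a * q ^ n) :=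
  Finset.prod_range_succ _ n

section qPoch

variable {q : ℂ}

theorem one_sub_norm_le_norm_one_sub_mul_pow (hq : ‖q‖ < 1) (n : ℕ) :
    1 - ‖q‖ ≤ ‖1 - q * q ^ n‖ := by
  have : ‖q * q ^ n‖ ≤ ‖q‖ := by
    rw [norm_mul, norm_pow]
    exact mul_le_of_le_one_right (norm_nonneg q) (pow_le_one₀ (norm_nonneg q) hq.le)
  calc 1 - ‖q‖ ≤ ‖(1 : ℂ)‖ - ‖q * q ^ n‖ := by rw [norm_one]; linarith
    _ ≤ ‖1 - q * q ^ n‖ := norm_sub_norm_le _ _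

theorem one_sub_mul_pow_ne_zero (hq : ‖q‖ < 1) (n : ℕ) : 1 - q * q ^ n ≠ 0 :=
  norm_pos_iff.mp <| (sub_pos.mpr hq).trans_le (one_sub_norm_le_norm_one_sub_mul_pow hq n)

theorem qPoch_self_ne_zero (hq : ‖q‖ < 1) (n : ℕ) : qPoch q q n ≠ 0 :=
  Finset.prod_ne_zero_iff.mpr fun i _ => one_sub_mul_pow_ne_zero hq i

theorem norm_le_div_of_mul_one_sub_mul_pow_eq (hq : ‖q‖ < 1) {x y : ℂ} {n : ℕ}
    (h : x * (1 - q * q ^ n) = y) : ‖x‖ ≤ ‖y‖ / (1 - ‖q‖) := by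
  rw [le_div_iff₀ (sub_pos.mpr hq), ← h, norm_mul]
  exact mul_le_mul_of_nonneg_left (one_sub_norm_le_norm_one_sub_mul_pow hq n) (norm_nonneg x)

end qPoch

/-- With `q = u²`, `prodCoeff u v n` and `invProdCoeff u w n` are the coefficients of `xⁿ` in
`(q v x; q)_∞` and in `1 / (w x; q)_∞` (Euler's expansions), extended by `0` to `n < 0`. -/
noncomputable def prodCoeff (u v : ℂ) : ℤ → ℂ
  | .ofNat n => (-1) ^ n * u ^ (n * (n + 1)) * v ^ n / qPoch (u ^ 2) (u ^ 2) n
  | .negSucc _ => 0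

noncomputable def invProdCoeff (u w : ℂ) : ℤ → ℂ
  | .ofNat n => w ^ n / qPoch (u ^ 2) (u ^ 2) n
  | .negSucc _ => 0

noncomputable def tetSeries (u v w : ℂ) (e : ℤ) : ℂ :=
  ∑' n : ℤ, prodCoeff u v n * invProdCoeff u w (n + e)

variable {u : ℂ}

theorem prodCoeff_natCast (v : ℂ) (n : ℕ) :
    prodCoeff u v n = (-1) ^ n * u ^ (n * (n + 1)) * v ^ n / qPoch (u ^ 2) (u ^ 2) n :=
  rfl

theorem invProdCoeff_natCast (w : ℂ) (n : ℕ) :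
    invProdCoeff u w n = w ^ n / qPoch (u ^ 2) (u ^ 2) n :=
  rfl

theorem prodCoeff_of_neg (v : ℂ) : ∀ {n : ℤ}, n < 0 → prodCoeff u v n = 0
  | .ofNat _, h => absurd h (Int.natCast_nonneg _).not_gt
  | .negSucc _, _ => rfl

theorem invProdCoeff_of_neg (w : ℂ) : ∀ {n : ℤ}, n < 0 → invProdCoeff u w n = 0
  | .ofNat _, h => absurd h (Int.natCast_nonneg _).not_gt
  | .negSucc _, _ => rfl

theorem support_prodCoeff_mul_subset (v : ℂ) (g : ℤ → ℂ) :
    Function.support (fun n => prodCoeff u v n * g n) ⊆ Set.range ((↑) : ℕ → ℤ) := by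
  intro n hn
  lift n to ℕ using not_lt.mp fun hneg => hn (by simp only [prodCoeff_of_neg v hneg, zero_mul])
  exact ⟨n, rfl⟩

theorem prodCoeff_zero (v : ℂ) : prodCoeff u v 0 = 1 :=
  (prodCoeff_natCast v 0).trans (by simp [qPoch])

theorem invProdCoeff_zero (w : ℂ) : invProdCoeff u w 0 = 1 :=
  (invProdCoeff_natCast w 0).trans (by simp [qPoch])

theorem prodCoeff_eq_sub (hq : ‖u ^ 2‖ < 1) (v : ℂ) (n : ℤ) :
    prodCoeff u v n = prodCoeff u (u ^ 2 * v) n - u ^ 2 * v * prodCoeff u (u ^ 2 * v) (n - 1) := by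
  rcases lt_trichotomy n 0 with hn | rfl | hn
  · simp [prodCoeff_of_neg _ hn, prodCoeff_of_neg _ (by omega : n - 1 < 0)]
  · simp [prodCoeff_of_neg _ (by norm_num : (-1 : ℤ) < 0), prodCoeff_zero]
  · obtain ⟨k, rfl⟩ : ∃ k : ℕ, n = k + 1 := ⟨n.toNat - 1, by omega⟩
    rw [add_sub_cancel_right, ← Nat.cast_add_one, prodCoeff_natCast, prodCoeff_natCast,
      prodCoeff_natCast, qPoch_succ]
    have := qPoch_self_ne_zero hq k
    have := one_sub_mul_pow_ne_zero hq k
    field_simp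
    ring

theorem invProdCoeff_sq_mul (hq : ‖u ^ 2‖ < 1) (w : ℂ) (n : ℤ) :
    invProdCoeff u (u ^ 2 * w) n = invProdCoeff u w n - w * invProdCoeff u w (n - 1) := by
  rcases lt_trichotomy n 0 with hn | rfl | hn
  · simp [invProdCoeff_of_neg _ hn, invProdCoeff_of_neg _ (by omega : n - 1 < 0)]
  · simp [invProdCoeff_of_neg _ (by norm_num : (-1 : ℤ) < 0), invProdCoeff_zero]
  · obtain ⟨k, rfl⟩ : ∃ k : ℕ, n = k + 1 := ⟨n.toNat - 1, by omega⟩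
    rw [add_sub_cancel_right, ← Nat.cast_add_one, invProdCoeff_natCast, invProdCoeff_natCast,
      invProdCoeff_natCast, qPoch_succ]
    have := qPoch_self_ne_zero hq k
    have := one_sub_mul_pow_ne_zero hq k
    field_simp
    ring

theorem norm_prodCoeff_succ_le (hq : ‖u ^ 2‖ < 1) (v : ℂ) (n : ℕ) :
    ‖prodCoeff u v (n + 1 : ℕ)‖ ≤ ‖u ^ 2‖ ^ (n + 1) * ‖v‖ * ‖prodCoeff u v n‖ / (1 - ‖u ^ 2‖) := by
  calc ‖prodCoeff u v (n + 1 : ℕ)‖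
      ≤ ‖-((u ^ 2) ^ (n + 1) * v) * prodCoeff u v n‖ / (1 - ‖u ^ 2‖) := by
        refine norm_le_div_of_mul_one_sub_mul_pow_eq hq (n := n) ?_
        rw [prodCoeff_natCast, prodCoeff_natCast, qPoch_succ]
        have := qPoch_self_ne_zero hq n
        have := one_sub_mul_pow_ne_zero hq n
        field_simp
        ring
    _ = _ := by rw [norm_mul, norm_neg, norm_mul, norm_pow]

theorem norm_invProdCoeff_succ_le (hq : ‖u ^ 2‖ < 1) (w : ℂ) (n : ℕ) :
    ‖invProdCoeff u w (n + 1 : ℕ)‖ ≤ ‖w‖ * ‖invProdCoeff u w n‖ / (1 - ‖u ^ 2‖) := by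
  rw [← norm_mul]
  refine norm_le_div_of_mul_one_sub_mul_pow_eq hq (n := n) ?_
  rw [invProdCoeff_natCast, invProdCoeff_natCast, qPoch_succ]
  have := qPoch_self_ne_zero hq n
  have := one_sub_mul_pow_ne_zero hq n
  field_simp
  ring

theorem summable_tetSeries (hq : ‖u ^ 2‖ < 1) (v w : ℂ) (e : ℤ) :
    Summable fun n : ℤ => prodCoeff u v n * invProdCoeff u w (n + e) := by
  refine (Nat.cast_injective.summable_iff fun n hn => Function.notMem_support.mp fun h =>
    hn (support_prodCoeff_mul_subset v (fun n => invProdCoeff u w (n + e)) h)).mp ?_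
  set C := ‖v‖ * ‖w‖ / (1 - ‖u ^ 2‖) ^ 2 with hC
  have hsmall : ∀ᶠ n : ℕ in Filter.atTop, C * ‖u ^ 2‖ ^ (n + 1) ≤ 1 / 2 := by
    have : Filter.Tendsto (fun n : ℕ => C * ‖u ^ 2‖ ^ (n + 1)) Filter.atTop (nhds 0) := by
      simpa using ((tendsto_pow_atTop_nhds_zero_of_lt_one (norm_nonneg _) hq).comp
        (Filter.tendsto_add_atTop_nat 1)).const_mul C
    exact this.eventually (Iic_mem_nhds (by norm_num))
  have hindex : ∀ᶠ n : ℕ in Filter.atTop, 0 ≤ (n : ℤ) + e :=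
    Filter.eventually_atTop.mpr ⟨e.natAbs, fun n hn => by omega⟩
  refine summable_of_ratio_norm_eventually_le (r := 1 / 2) (by norm_num) ?_
  filter_upwards [hsmall, hindex] with n hn hp
  obtain ⟨p, hp⟩ : ∃ p : ℕ, (n : ℤ) + e = p := ⟨_, (Int.toNat_of_nonneg hp).symm⟩
  have hp1 : ((n + 1 : ℕ) : ℤ) + e = (p + 1 : ℕ) := by push_cast; omega
  simp only [Function.comp_apply, hp, hp1, norm_mul]
  calc ‖prodCoeff u v (n + 1 : ℕ)‖ * ‖invProdCoeff u w (p + 1 : ℕ)‖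
      ≤ ‖u ^ 2‖ ^ (n + 1) * ‖v‖ * ‖prodCoeff u v n‖ / (1 - ‖u ^ 2‖) *
          (‖w‖ * ‖invProdCoeff u w p‖ / (1 - ‖u ^ 2‖)) :=
        mul_le_mul (norm_prodCoeff_succ_le hq v n) (norm_invProdCoeff_succ_le hq w p)
          (norm_nonneg _) (by positivity)
    _ = C * ‖u ^ 2‖ ^ (n + 1) * (‖prodCoeff u v n‖ * ‖invProdCoeff u w p‖) := by
        rw [hC]
        field_simp
    _ ≤ 1 / 2 * (‖prodCoeff u v n‖ * ‖invProdCoeff u w p‖) := by gcongr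

theorem tetSeries_eq_sub (hq : ‖u ^ 2‖ < 1) (v w : ℂ) (e : ℤ) :
    tetSeries u v w e =
      tetSeries u (u ^ 2 * v) w e - u ^ 2 * v * tetSeries u (u ^ 2 * v) w (e + 1) := by
  have hshift : tetSeries u (u ^ 2 * v) w (e + 1) =
      ∑' n : ℤ, prodCoeff u (u ^ 2 * v) (n - 1) * invProdCoeff u w (n + e) := by
    rw [tetSeries, ← (Equiv.subRight (1 : ℤ)).tsum_eq]
    simp only [Equiv.subRight_apply, sub_add_add_cancel]
  have hsum : Summable fun n : ℤ => prodCoeff u (u ^ 2 * v) (n - 1) * invProdCoeff u w (n + e) := by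
    refine ((Equiv.subRight (1 : ℤ)).summable_iff.mpr
      (summable_tetSeries hq (u ^ 2 * v) w (e + 1))).congr fun n => ?_
    simp only [Function.comp_apply, Equiv.subRight_apply, sub_add_add_cancel]
  rw [hshift, ← tsum_mul_left, tetSeries, tetSeries,
    ← (summable_tetSeries hq _ w e).tsum_sub (hsum.mul_left _)]
  congr 1 with n
  rw [prodCoeff_eq_sub hq]
  ring

theorem tetSeries_sq_mul_right (hq : ‖u ^ 2‖ < 1) (v w : ℂ) (e : ℤ) :
    tetSeries u v (u ^ 2 * w) e = tetSeries u v w e - w * tetSeries u v w (e - 1) := by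
  rw [tetSeries, tetSeries, tetSeries, ← tsum_mul_left,
    ← (summable_tetSeries hq v w e).tsum_sub ((summable_tetSeries hq v w (e - 1)).mul_left _)]
  congr 1 with n
  rw [invProdCoeff_sq_mul hq, add_sub_assoc]
  ring

theorem tetSeries_eq_of_mul_mul_pow_eq_one (hq : ‖u ^ 2‖ < 1) (k : ℕ) {v w : ℂ}
    (hvw : v * w * (u ^ 2) ^ k = 1) (e : ℤ) :
    tetSeries u v w e = (-1) ^ k * v ^ k * u ^ (k * (k + 1)) *
      tetSeries u ((u ^ 2) ^ k * v) ((u ^ 2) ^ k * w) (e + k) := by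
  induction k generalizing v w e with
  | zero => simp
  | succ k ih =>
    have hvw' : u ^ 2 * v * w * (u ^ 2) ^ k = 1 := by rw [← hvw]; ring
    have hright := tetSeries_sq_mul_right hq ((u ^ 2) ^ (k + 1) * v) ((u ^ 2) ^ k * w) (e + k + 1)
    rw [add_sub_cancel_right, ← mul_assoc, ← pow_succ'] at hright
    rw [tetSeries_eq_sub hq, ih hvw' e, ih hvw' (e + 1), add_right_comm e 1,
      Nat.cast_succ, ← add_assoc, hright, ← mul_assoc, ← pow_succ]
    -- `v w q^(k+1) = 1` makes `q v` the inverse of `qᵏ w`, so the two shifted series merge.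
    linear_combination (-((-1 : ℂ) ^ k * v ^ k * u ^ (k * k + 3 * k) *
      tetSeries u ((u ^ 2) ^ (k + 1) * v) ((u ^ 2) ^ k * w) (e + k))) * hvw

theorem tetSeries_zpow_neg (hu : u ≠ 0) (hq : ‖u ^ 2‖ < 1) (k e : ℤ) :
    tetSeries u (u ^ (-k)) (u ^ (-k)) e = (-u) ^ k * tetSeries u (u ^ k) (u ^ k) (e + k) := by
  suffices h : ∀ (k : ℕ) (e : ℤ), tetSeries u (u ^ (-k : ℤ)) (u ^ (-k : ℤ)) e =
      (-u) ^ k * tetSeries u (u ^ k) (u ^ k) (e + k) by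
    obtain ⟨k, rfl | rfl⟩ := Int.eq_nat_or_neg k
    · simpa using h k e
    · rw [neg_neg, h k (e + -k), neg_add_cancel_right, zpow_natCast u, zpow_neg, zpow_natCast,
        inv_mul_cancel_left₀ (pow_ne_zero k (neg_ne_zero.mpr hu))]
  intro k e
  have hvw : u ^ (-k : ℤ) * u ^ (-k : ℤ) * (u ^ 2) ^ k = 1 := by
    rw [← pow_mul, zpow_neg, zpow_natCast]
    field_simp
    ring
  rw [tetSeries_eq_of_mul_mul_pow_eq_one hq k hvw, zpow_neg, zpow_natCast]
  have hshift : (u ^ 2) ^ k * (u ^ k)⁻¹ = u ^ k := by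
    field_simp
    ring
  have hcoeff : (-1) ^ k * (u ^ k)⁻¹ ^ k * u ^ (k * (k + 1)) = (-u) ^ k := by
    rw [inv_pow, ← pow_mul, mul_add_one k k, pow_add, mul_assoc, inv_mul_cancel_left₀
      (pow_ne_zero _ hu), neg_pow u]
  rw [hshift, hcoeff]

theorem prodCoeff_mul_invProdCoeff_mul_neg_pow (hu : u ≠ 0) {v v' : ℂ} {a b : ℕ}
    (h : v * u ^ a = v' * u ^ b) :
    prodCoeff u v a * invProdCoeff u v b * (-u) ^ b =
      (-u) ^ a * (prodCoeff u v' b * invProdCoeff u v' a) := by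
  rw [prodCoeff_natCast, prodCoeff_natCast, invProdCoeff_natCast, invProdCoeff_natCast]
  refine mul_left_cancel₀ (pow_ne_zero (a * b) hu) ?_
  linear_combination (-1) ^ (a + b) * u ^ (a + b) *
    (qPoch (u ^ 2) (u ^ 2) a * qPoch (u ^ 2) (u ^ 2) b)⁻¹ * congrArg (· ^ (a + b)) h

theorem prodCoeff_mul_invProdCoeff_zpow (hu : u ≠ 0) (c j s : ℤ) :
    prodCoeff u (u ^ c) j * invProdCoeff u (u ^ c) (j + s) =
      (-u) ^ (-s) * (prodCoeff u (u ^ (c - s)) (j + s) * invProdCoeff u (u ^ (c - s)) j) := by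
  rcases lt_or_ge j 0 with hj | hj
  · rw [prodCoeff_of_neg _ hj, invProdCoeff_of_neg _ hj, zero_mul, mul_zero, mul_zero]
  rcases lt_or_ge (j + s) 0 with hjs | hjs
  · rw [prodCoeff_of_neg _ hjs, invProdCoeff_of_neg _ hjs, mul_zero, zero_mul, mul_zero]
  lift j to ℕ using hj with a
  lift (a : ℤ) + s to ℕ using hjs with b hb
  obtain rfl : s = b - a := by omega
  have h : u ^ c * u ^ a = u ^ (c - (b - a)) * u ^ b := by
    rw [← zpow_natCast, ← zpow_natCast, ← zpow_add₀ hu, ← zpow_add₀ hu]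
    ring_nf
  rw [neg_sub, zpow_sub₀ (neg_ne_zero.mpr hu), zpow_natCast, zpow_natCast, div_mul_eq_mul_div,
    eq_div_iff (pow_ne_zero b (neg_ne_zero.mpr hu)), prodCoeff_mul_invProdCoeff_mul_neg_pow hu h]

theorem tetSeries_zpow_reflect (hu : u ≠ 0) (c s : ℤ) :
    tetSeries u (u ^ c) (u ^ c) s = (-u) ^ (-s) * tetSeries u (u ^ (c - s)) (u ^ (c - s)) (-s) := by
  rw [tetSeries, tetSeries, ← tsum_mul_left, ← (Equiv.addRight s).tsum_eq fun j =>
    (-u) ^ (-s) * (prodCoeff u (u ^ (c - s)) j * invProdCoeff u (u ^ (c - s)) (j + -s))]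
  congr 1 with j
  rw [prodCoeff_mul_invProdCoeff_zpow hu, Equiv.coe_addRight, add_neg_cancel_right]

theorem tetTerm_eq (hu : u ≠ 0) (m e : ℤ) (n : ℕ) :
    tetTerm u m e n = prodCoeff u (u ^ (-m)) n * invProdCoeff u (u ^ (-m)) (n + e) := by
  rcases lt_or_ge ((n : ℤ) + e) 0 with hne | hne
  · rw [tetTerm, if_neg (by omega), invProdCoeff_of_neg _ hne, mul_zero]
  lift (n : ℤ) + e to ℕ using hne with p hp
  have hpow : u ^ ((n : ℤ) * (n + 1) - (2 * n + e) * m) =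
      u ^ (n * (n + 1)) * (u ^ (-m)) ^ n * (u ^ (-m)) ^ p := by
    rw [← zpow_natCast u, ← zpow_natCast (u ^ (-m)), ← zpow_natCast (u ^ (-m)), ← zpow_mul,
      ← zpow_mul, ← zpow_add₀ hu, ← zpow_add₀ hu]
    congr 1
    push_cast
    linear_combination m * hp
  rw [tetTerm, if_pos (by omega), ← hp, Int.toNat_natCast, hpow, prodCoeff_natCast,
    invProdCoeff_natCast]
  ring

theorem tetIndex_eq_tetSeries (hu : u ≠ 0) (m e : ℤ) :
    tetIndex u m e = tetSeries u (u ^ (-m)) (u ^ (-m)) e := by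
  rw [tetSeries, ← Nat.cast_injective.tsum_eq (support_prodCoeff_mul_subset _ _)]
  exact tsum_congr (tetTerm_eq hu m e)

/-- `I_Δ(m,e) = (-q^{1/2})^{-e} I_Δ(e, -e-m)`, with `u = q^{1/2}`. -/
theorem stmt_3 (u : ℂ) (hu0 : 0 < ‖u‖) (hu1 : ‖u‖ < 1) (m e : ℤ) :
    tetIndex u m e = (-u) ^ (-e) * tetIndex u e (-e - m) := by
  have hu : u ≠ 0 := norm_pos_iff.mp hu0
  have hq : ‖u ^ 2‖ < 1 := by
    rw [norm_pow]
    exact pow_lt_one₀ (norm_nonneg u) hu1 two_ne_zero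
  rw [tetIndex_eq_tetSeries hu, tetIndex_eq_tetSeries hu, tetSeries_zpow_neg hu hq,
    tetSeries_zpow_reflect hu m (e + m), ← mul_assoc, ← zpow_add₀ (neg_ne_zero.mpr hu),
    show m + -(e + m) = -e by ring, show m - (e + m) = -e by ring, neg_add']
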